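/- Consider the matrix ODE along a curve: for continuous functions f, g : [0,1] → ℂ and a parameter t ∈ ℂ, let X(s,t) ∈ Matrix (Fin 2) (Fin 2) ℂ solve ∂ₛX(s,t) = X(s,t)·[[0, t·f(s)],[g(s), 0]] with X(0,t) = Id, and set M(t) = X(1,t). Define the iterated integrals I₀ = ∫₀¹ f(s) ds, I₁ = ∫₀¹ f(s)·(∫₀ˢ g(v) dv) ds, I₂ = ∫₀¹ g(s)·(∫₀ˢ f(u)·(∫₀ᵘ g(v) dv) du) ds. Assume X is twice continuously differentiable jointly in (s,t) and ∫₀¹ g(s) ds = 0. Then the map M̃ : λ ↦ M(λ⁻¹(λ−1)²) satisfies (d²_λ M̃)(1) = 2·[[−I₁, I₀],[I₂, I₁]]. -/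

import Mathlib

/-!
Differentiating the ODE in `t` (Schwarz's theorem for the `C²` map `X`) shows that, for each
direction `v`, the partial derivative `∂ₜX(·,t)v` solves the inhomogeneous linear equation
`Y' = Y (A + t B) + X (v B)`, where `[[0, t f],[g, 0]] = A + t B`. Since `∂ₜX·i` and `i ∂ₜX·1`
solve the same equation with the same initial value `0`, the real derivative of `t ↦ X(s,t)` is
complex linear, so `M` is entire and `M'(0) = ∂ₜX(1,0)·1`.

At `t = 0` everything is explicit: with `G(s) = ∫₀ˢ g`, the solution is `P(s) = [[1,0],[G(s),1]]`,
and by variation of constants `∂ₜX(s,0)·1 = C(s) P(s)` with `C' = P B P⁻¹ = [[-fG, f],[-fG², fG]]`.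
Since `G(1) = 0`, `P(1) = 1` and an integration by parts turns `-∫₀¹ f G²` into `I₂`, so
`M'(0) = [[-I₁, I₀],[I₂, I₁]]`. Finally `φ(λ) = λ⁻¹(λ-1)²` has `φ(1) = φ'(1) = 0` and
`φ''(1) = 2`, whence `(M ∘ φ)''(1) = 2 M'(0)`.
-/

attribute [local instance] Matrix.normedAddCommGroup Matrix.normedSpace

open Set Filter Topology

variable {n : Type*} [Fintype n]

noncomputable def Matrix.mulCLM : Matrix n n ℂ →L[ℝ] Matrix n n ℂ →L[ℝ] Matrix n n ℂ :=
  LinearMap.toContinuousLinearMap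
    (LinearMap.toContinuousLinearMap.toLinearMap ∘ₗ LinearMap.mul ℝ (Matrix n n ℂ))

open Matrix

theorem HasDerivAt.matrix_mul {u v : ℝ → Matrix n n ℂ} {u' v' : Matrix n n ℂ} {x : ℝ}
    (hu : HasDerivAt u u' x) (hv : HasDerivAt v v' x) :
    HasDerivAt (fun y => u y * v y) (u' * v x + u x * v') x :=
  (mulCLM.hasDerivAt_of_bilinear (fun _ => hu) (fun _ => hv)).congr_deriv (add_comm _ _)

/-- The right derivative at `a` required by `ODE_solution_unique_of_mem_Icc_right` is recovered
from the limit of the derivative. -/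
theorem eqOn_zero_of_hasDerivAt_clm_apply {E : Type*} [NormedAddCommGroup E]
    [NormedSpace ℝ E] {L : ℝ → E →L[ℝ] E} {D : ℝ → E} {a b : ℝ}
    (hL : ContinuousOn L (Icc a b)) (hD : ContinuousOn D (Icc a b))
    (hD' : ∀ s ∈ Ioo a b, HasDerivAt D (L s (D s)) s) (ha : D a = 0) :
    EqOn D 0 (Icc a b) := by
  obtain ⟨C, hC⟩ := isCompact_Icc.exists_bound_of_continuousOn hL
  have hlip : ∀ s ∈ Ico a b, LipschitzOnWith C.toNNReal (L s) univ := fun s hs =>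
    ((L s).lipschitz.weaken (by simpa [← NNReal.coe_le_coe] using
      (hC s (Ico_subset_Icc_self hs)).trans (le_max_left C 0))).lipschitzOnWith
  have hright : ∀ s ∈ Ico a b, HasDerivWithinAt D (L s (D s)) (Ici s) s := by
    rintro s ⟨has, hsb⟩
    obtain rfl | has := has.eq_or_lt
    · refine hasDerivWithinAt_Ici_of_tendsto_deriv
        (fun y hy => (hD' y hy).differentiableAt.differentiableWithinAt)
        ((hD a ⟨le_rfl, hsb.le⟩).mono Ioo_subset_Icc_self) (Ioo_mem_nhdsGT hsb) ?_
      have hlim : ContinuousWithinAt (fun y => L y (D y)) (Icc a b) a :=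
        (hL a ⟨le_rfl, hsb.le⟩).clm_apply (hD a ⟨le_rfl, hsb.le⟩)
      rw [← nhdsWithin_Ioo_eq_nhdsGT hsb]
      refine (hlim.mono Ioo_subset_Icc_self).tendsto.congr' ?_
      filter_upwards [self_mem_nhdsWithin] with y hy using (hD' y hy).deriv.symm
    · exact (hD' s ⟨has, hsb⟩).hasDerivWithinAt
  refine ODE_solution_unique_of_mem_Icc_right hlip hD hright (fun _ _ => mem_univ _)
    continuousOn_const (fun s _ => ?_) (fun _ _ => mem_univ _) ha
  simp only [Pi.zero_apply, map_zero]
  exact hasDerivWithinAt_const s (Ici s) (0 : E)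

theorem eqOn_of_hasDerivAt_mul_add {A c φ ψ : ℝ → Matrix n n ℂ} {a b : ℝ}
    (hA : ContinuousOn A (Icc a b)) (hφ : ContinuousOn φ (Icc a b))
    (hψ : ContinuousOn ψ (Icc a b)) (hφ' : ∀ s ∈ Ioo a b, HasDerivAt φ (φ s * A s + c s) s)
    (hψ' : ∀ s ∈ Ioo a b, HasDerivAt ψ (ψ s * A s + c s) s) (ha : φ a = ψ a) :
    EqOn φ ψ (Icc a b) := by
  have hL : ContinuousOn (fun s => mulCLM.flip (A s)) (Icc a b) := by fun_prop
  have hD' : ∀ s ∈ Ioo a b, HasDerivAt (φ - ψ) (mulCLM.flip (A s) ((φ - ψ) s)) s := fun s hs =>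
    ((hφ' s hs).sub (hψ' s hs)).congr_deriv (by rw [add_sub_add_right_eq_sub, ← sub_mul]; rfl)
  have h := eqOn_zero_of_hasDerivAt_clm_apply hL (hφ.sub hψ) hD' (by simp [ha])
  exact fun s hs => sub_eq_zero.1 (h hs)

theorem HasFDerivAt.hasDerivAt_of_map_I {E : Type*} [NormedAddCommGroup E] [NormedSpace ℂ E]
    {h : ℂ → E} {L : ℂ →L[ℝ] E} {t : ℂ} (hh : HasFDerivAt h L t)
    (hI : L Complex.I = Complex.I • L 1) : HasDerivAt h (L 1) t := by
  have hL : (ContinuousLinearMap.toSpanSingleton ℂ (L 1)).restrictScalars ℝ = L := by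
    ext w
    have hw : w = w.re • (1 : ℂ) + w.im • Complex.I := by simp [Complex.re_add_im]
    change w • L 1 = L w
    rw [hw, map_add, map_smul, map_smul, hI, add_smul, smul_assoc, smul_assoc, one_smul]
  simpa using (hasFDerivAt_of_restrictScalars ℝ hh hL).hasDerivAt

theorem iteratedDeriv_two_comp_of_deriv_eq_zero {E : Type*} [NormedAddCommGroup E]
    [NormedSpace ℂ E] {M : ℂ → E} {φ φ' : ℂ → ℂ} {x c : ℂ} (hM : Differentiable ℂ M)
    (hM' : DifferentiableAt ℂ (deriv M) (φ x)) (hφ : ∀ᶠ y in 𝓝 x, HasDerivAt φ (φ' y) y)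
    (hφ' : HasDerivAt φ' c x) (hx : φ' x = 0) :
    iteratedDeriv 2 (fun y => M (φ y)) x = c • deriv M (φ x) := by
  have hderiv : deriv (fun y => M (φ y)) =ᶠ[𝓝 x] fun y => φ' y • deriv M (φ y) := by
    filter_upwards [hφ] with y hy using ((hM (φ y)).hasDerivAt.scomp y hy).deriv
  have h2 := hφ'.fun_smul (hM'.hasDerivAt.scomp x hφ.self_of_nhds)
  rw [iteratedDeriv_succ, iteratedDeriv_one, hderiv.deriv_eq]
  erw [h2.deriv]
  simp [hx]

theorem hasDerivAt_inv_mul_sub_one_sq {l : ℂ} (hl : l ≠ 0) :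
    HasDerivAt (fun l : ℂ => l⁻¹ * (l - 1) ^ 2) (1 - (l ^ 2)⁻¹) l := by
  refine ((hasDerivAt_inv hl).fun_mul (((hasDerivAt_id l).sub_const 1).fun_pow 2)).congr_deriv ?_
  simp only [id]
  field_simp
  ring

theorem iteratedDeriv_two_comp_inv_mul_sub_one_sq {E : Type*} [NormedAddCommGroup E]
    [NormedSpace ℂ E] [CompleteSpace E] {M : ℂ → E} (hM : Differentiable ℂ M) :
    iteratedDeriv 2 (fun l : ℂ => M (l⁻¹ * (l - 1) ^ 2)) 1 = (2 : ℂ) • deriv M 0 := by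
  have hφ : ∀ᶠ l in 𝓝 (1 : ℂ), HasDerivAt (fun l : ℂ => l⁻¹ * (l - 1) ^ 2) (1 - (l ^ 2)⁻¹) l := by
    filter_upwards [isOpen_ne.mem_nhds one_ne_zero] with l hl
      using hasDerivAt_inv_mul_sub_one_sq hl
  have hφ' : HasDerivAt (fun l : ℂ => 1 - (l ^ 2)⁻¹) 2 1 :=
    ((((hasDerivAt_id (1 : ℂ)).fun_pow 2).fun_inv (by norm_num)).const_sub 1).congr_deriv
      (by norm_num)
  simpa using iteratedDeriv_two_comp_of_deriv_eq_zero hM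
    ((hM.analyticAt _).deriv.differentiableAt) hφ hφ' (by norm_num)

section Primitive

variable {E : Type*} [NormedAddCommGroup E] [NormedSpace ℝ E] {h : ℝ → E} {b : ℝ}

noncomputable def primitive (h : ℝ → E) (s : ℝ) : E := ∫ v in (0 : ℝ)..s, h v

@[simp] theorem primitive_zero (h : ℝ → E) : primitive h 0 = 0 :=
  intervalIntegral.integral_same

theorem ContinuousOn.hasDerivAt_primitive [CompleteSpace E] (hh : ContinuousOn h (Icc 0 b))
    {s : ℝ} (hs : s ∈ Ioo 0 b) : HasDerivAt (primitive h) (h s) s :=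
  intervalIntegral.integral_hasDerivAt_right
    ((hh.mono (uIcc_of_le hs.1.le ▸ Icc_subset_Icc_right hs.2.le)).intervalIntegrable)
    ⟨Icc 0 b, Icc_mem_nhds hs.1 hs.2, hh.aestronglyMeasurable measurableSet_Icc⟩
    (hh.continuousAt (Icc_mem_nhds hs.1 hs.2))

theorem ContinuousOn.continuousOn_primitive (hh : ContinuousOn h (Icc 0 b)) (hb : 0 ≤ b) :
    ContinuousOn (primitive h) (Icc 0 b) := by
  rw [← uIcc_of_le hb] at hh ⊢
  exact intervalIntegral.continuousOn_primitive_interval (hh.integrableOn_compact isCompact_uIcc)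

end Primitive

theorem primitive_mul_primitive_eq_neg {f g : ℝ → ℂ} (hf : ContinuousOn f (Icc 0 1))
    (hg : ContinuousOn g (Icc 0 1)) (hg1 : primitive g 1 = 0) :
    primitive (g * primitive (f * primitive g)) 1 = -primitive (f * primitive g ^ 2) 1 := by
  have hG := hg.continuousOn_primitive zero_le_one
  have hfG : ContinuousOn (f * primitive g) (Icc 0 1) := hf.mul hG
  have hparts := intervalIntegral.integral_mul_deriv_eq_deriv_mul_of_hasDerivAt
    (u := primitive (f * primitive g)) (v := primitive g)
    (by simpa using hfG.continuousOn_primitive zero_le_one) (by simpa using hG)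
    (fun s hs => hfG.hasDerivAt_primitive (by simpa using hs))
    (fun s hs => hg.hasDerivAt_primitive (by simpa using hs))
    (hfG.intervalIntegrable_of_Icc zero_le_one) (hg.intervalIntegrable_of_Icc zero_le_one)
  simp only [hg1, primitive_zero, mul_zero, sub_zero, zero_sub] at hparts
  simpa only [primitive, Pi.mul_apply, mul_comm (g _), sq, ← mul_assoc] using hparts

/-- Equality of the mixed partial derivatives of a `C²` map (Schwarz). -/
theorem hasDerivAt_fderiv_apply_inr {F E : Type*} [NormedAddCommGroup F] [NormedSpace ℝ F]
    [NormedAddCommGroup E] [NormedSpace ℝ E] {X : ℝ × F → E} {s : ℝ} {t : F}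
    (hX : ContDiffAt ℝ 2 X (s, t)) {L : F →L[ℝ] E}
    (hL : HasFDerivAt (fun t' => fderiv ℝ X (s, t') (1, 0)) L t) (v : F) :
    HasDerivAt (fun s' => fderiv ℝ X (s', t) (0, v)) (L v) s := by
  set D2 := fderiv ℝ (fderiv ℝ X) (s, t)
  have hD2 : HasFDerivAt (fderiv ℝ X) D2 (s, t) :=
    ((hX.fderiv_right (m := 1) (by norm_num)).differentiableAt one_ne_zero).hasFDerivAt
  have hsymm : IsSymmSndFDerivAt ℝ X (s, t) := hX.isSymmSndFDerivAt (by simp)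
  have hslice : HasDerivAt (fun s' : ℝ => (s', t)) ((1 : ℝ), (0 : F)) s :=
    (hasDerivAt_id s).prodMk (hasDerivAt_const s t)
  have hderiv_s : HasDerivAt (fun s' => fderiv ℝ X (s', t) (0, v)) (D2 (1, 0) (0, v)) s := by
    have h := hD2.comp_hasDerivAt s hslice
    have h' := h.clm_apply (hasDerivAt_const s ((0 : ℝ), v))
    simp only [map_zero, add_zero] at h'
    exact h'
  have hderiv_t : HasFDerivAt (fun t' => fderiv ℝ X (s, t') (1, 0))
      ((ContinuousLinearMap.apply ℝ E ((1 : ℝ), (0 : F))).comp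
        (D2.comp (ContinuousLinearMap.inr ℝ ℝ F))) t :=
    (ContinuousLinearMap.apply ℝ E ((1 : ℝ), (0 : F))).hasFDerivAt.comp t
      (hD2.comp t (hasFDerivAt_prodMk_right s t))
  have hLv : L v = D2 (0, v) (1, 0) := congrArg (fun L' : F →L[ℝ] E => L' v) (hL.unique hderiv_t)
  rw [hLv, hsymm]
  exact hderiv_s

section Strip

variable {E : Type*} [NormedAddCommGroup E] [NormedSpace ℝ E]

/-- The partial derivative `∂ₜX(s,t)`, taken within the strip `[0,1] × ℂ` so that it is also
meaningful (and continuous in `s`) at the boundary `s ∈ {0, 1}`. -/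
noncomputable def partialT (X : ℝ × ℂ → E) (s : ℝ) (t : ℂ) : ℂ →L[ℝ] E :=
  (fderivWithin ℝ X (Icc 0 1 ×ˢ univ) (s, t)).comp (ContinuousLinearMap.inr ℝ ℝ ℂ)

theorem hasFDerivAt_partialT {X : ℝ × ℂ → E} (hX : DifferentiableOn ℝ X (Icc 0 1 ×ˢ univ))
    {s : ℝ} (hs : s ∈ Icc (0 : ℝ) 1) (t : ℂ) :
    HasFDerivAt (fun t' => X (s, t')) (partialT X s t) t := by
  rw [← hasFDerivWithinAt_univ]
  exact (hX (s, t) ⟨hs, trivial⟩).hasFDerivWithinAt.comp t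
    (hasFDerivAt_prodMk_right s t).hasFDerivWithinAt fun t' _ => ⟨hs, trivial⟩

theorem partialT_zero_eq_zero {X : ℝ × ℂ → E} (hX : DifferentiableOn ℝ X (Icc 0 1 ×ˢ univ))
    {x₀ : E} (hinit : ∀ t, X (0, t) = x₀) (t : ℂ) : partialT X 0 t = 0 :=
  (hasFDerivAt_partialT hX (left_mem_Icc.2 zero_le_one) t).unique
    ((hasFDerivAt_const x₀ t).congr_of_eventuallyEq (Eventually.of_forall hinit))

theorem continuousOn_partialT_apply {X : ℝ × ℂ → E} (hX : ContDiffOn ℝ 1 X (Icc 0 1 ×ˢ univ))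
    (t v : ℂ) : ContinuousOn (fun s => partialT X s t v) (Icc 0 1) := by
  have hcont := hX.continuousOn_fderivWithin
    ((uniqueDiffOn_Icc zero_lt_one).prod uniqueDiffOn_univ) le_rfl
  exact (hcont.comp (by fun_prop) fun s hs => ⟨hs, trivial⟩).clm_apply continuousOn_const

theorem partialT_apply_eq_fderiv {X : ℝ × ℂ → E} {s : ℝ} (hs : s ∈ Ioo (0 : ℝ) 1) (t v : ℂ) :
    partialT X s t v = fderiv ℝ X (s, t) (0, v) := by
  rw [partialT, fderivWithin_of_mem_nhds (prod_mem_nhds (Icc_mem_nhds hs.1 hs.2) univ_mem)]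
  rfl

end Strip

section LinearPotential

variable {A B : ℝ → Matrix n n ℂ} {X : ℝ × ℂ → Matrix n n ℂ}

theorem hasDerivAt_partialT_apply (hX : ContDiffOn ℝ 2 X (Icc 0 1 ×ˢ univ))
    (hode : ∀ t : ℂ, ∀ s ∈ Ioo (0 : ℝ) 1,
      HasDerivAt (fun s' => X (s', t)) (X (s, t) * (A s + t • B s)) s)
    (t v : ℂ) {s : ℝ} (hs : s ∈ Ioo (0 : ℝ) 1) :
    HasDerivAt (fun s' => partialT X s' t v)
      (partialT X s t v * (A s + t • B s) + X (s, t) * (v • B s)) s := by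
  have hnhds : ∀ t' : ℂ, Icc (0 : ℝ) 1 ×ˢ univ ∈ 𝓝 (s, t') := fun _ =>
    prod_mem_nhds (Icc_mem_nhds hs.1 hs.2) univ_mem
  have hfderiv : ∀ t', fderiv ℝ X (s, t') (1, 0) = X (s, t') * (A s + t' • B s) := fun t' =>
    have hdiff := (hX.contDiffAt (hnhds t')).differentiableAt (by norm_num)
    (hdiff.hasFDerivAt.comp_hasDerivAt s
      ((hasDerivAt_id s).prodMk (hasDerivAt_const s t'))).unique (hode t' s hs)
  have hprod := (mulCLM.hasFDerivAt_of_bilinear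
    (hasFDerivAt_partialT (hX.differentiableOn two_ne_zero) (Ioo_subset_Icc_self hs) t)
    (((hasFDerivAt_id (𝕜 := ℝ) t).smul_const (B s)).const_add (A s))).congr_of_eventuallyEq
    (f₁ := fun t' => fderiv ℝ X (s, t') (1, 0)) (Eventually.of_forall hfderiv)
  refine ((hasDerivAt_fderiv_apply_inr (hX.contDiffAt (hnhds t)) hprod v).congr_of_eventuallyEq
    ?_).congr_deriv (add_comm _ _)
  filter_upwards [Ioo_mem_nhds hs.1 hs.2] with s' hs' using partialT_apply_eq_fderiv hs' t v

theorem hasDerivAt_of_linear_potential [DecidableEq n] (hA : ContinuousOn A (Icc 0 1))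
    (hB : ContinuousOn B (Icc 0 1)) (hX : ContDiffOn ℝ 2 X (Icc 0 1 ×ˢ univ))
    (hode : ∀ t : ℂ, ∀ s ∈ Ioo (0 : ℝ) 1,
      HasDerivAt (fun s' => X (s', t)) (X (s, t) * (A s + t • B s)) s)
    (hinit : ∀ t, X (0, t) = 1) {s : ℝ} (hs : s ∈ Icc (0 : ℝ) 1) (t : ℂ) :
    HasDerivAt (fun t' => X (s, t')) (partialT X s t 1) t := by
  have hX1 : DifferentiableOn ℝ X (Icc 0 1 ×ˢ univ) := hX.differentiableOn two_ne_zero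
  have hpartial := continuousOn_partialT_apply (hX.of_le one_le_two) t
  refine (hasFDerivAt_partialT hX1 hs t).hasDerivAt_of_map_I ?_
  -- Cauchy–Riemann: `∂ₜX·i` and `i ∂ₜX·1` solve the same linear ODE with the same initial value.
  refine eqOn_of_hasDerivAt_mul_add (A := fun s => A s + t • B s)
    (c := fun s => X (s, t) * (Complex.I • B s)) (hA.add (hB.const_smul t))
    (hpartial Complex.I) ((hpartial 1).const_smul Complex.I)
    (fun s hs => hasDerivAt_partialT_apply hX hode t Complex.I hs)
    (fun s hs => ((hasDerivAt_partialT_apply hX hode t 1 hs).const_smul Complex.I).congr_deriv ?_)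
    (by simp [partialT_zero_eq_zero hX1 hinit]) hs
  simp only [Pi.smul_apply, smul_add, one_smul, smul_mul_assoc, mul_smul_comm]

end LinearPotential

theorem continuousOn_matrix_fin_two {a b c d : ℝ → ℂ} {S : Set ℝ} (ha : ContinuousOn a S)
    (hb : ContinuousOn b S) (hc : ContinuousOn c S) (hd : ContinuousOn d S) :
    ContinuousOn (fun s => !![a s, b s; c s, d s]) S :=
  continuousOn_pi.2 fun i => continuousOn_pi.2 fun j => by
    fin_cases i <;> fin_cases j <;> assumption

theorem hasDerivAt_matrix_fin_two {a b c d : ℝ → ℂ} {a' b' c' d' : ℂ} {s : ℝ}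
    (ha : HasDerivAt a a' s) (hb : HasDerivAt b b' s) (hc : HasDerivAt c c' s)
    (hd : HasDerivAt d d' s) :
    HasDerivAt (fun s => !![a s, b s; c s, d s]) !![a', b'; c', d'] s :=
  hasDerivAt_pi.2 fun i => hasDerivAt_pi.2 fun j => by
    fin_cases i <;> fin_cases j <;> assumption

theorem potential_eq_add_smul (a b t : ℂ) :
    !![0, t * a; b, 0] = !![0, 0; b, 0] + t • !![0, a; 0, 0] := by
  ext i j; fin_cases i <;> fin_cases j <;> simp

section OffDiagonal

variable {f g : ℝ → ℂ}

theorem eqOn_unipotent (hg : ContinuousOn g (Icc 0 1)) {Y : ℝ → Matrix (Fin 2) (Fin 2) ℂ}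
    (hY : ContinuousOn Y (Icc 0 1))
    (hY' : ∀ s ∈ Ioo (0 : ℝ) 1, HasDerivAt Y (Y s * !![0, 0; g s, 0]) s) (hY0 : Y 0 = 1) :
    EqOn Y (fun s => !![1, 0; primitive g s, 1]) (Icc 0 1) := by
  have hG := hg.continuousOn_primitive zero_le_one
  refine eqOn_of_hasDerivAt_mul_add (c := 0)
    (continuousOn_matrix_fin_two continuousOn_const continuousOn_const hg continuousOn_const) hY
    (continuousOn_matrix_fin_two continuousOn_const continuousOn_const hG continuousOn_const)
    (fun s hs => by simpa using hY' s hs) (fun s hs => ?_) (by simp [hY0, Matrix.one_fin_two])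
  refine (hasDerivAt_matrix_fin_two (hasDerivAt_const s 1) (hasDerivAt_const s 0)
    (hg.hasDerivAt_primitive hs) (hasDerivAt_const s 1)).congr_deriv ?_
  simp

theorem eqOn_first_variation (hf : ContinuousOn f (Icc 0 1)) (hg : ContinuousOn g (Icc 0 1))
    {Z : ℝ → Matrix (Fin 2) (Fin 2) ℂ} (hZ : ContinuousOn Z (Icc 0 1))
    (hZ' : ∀ s ∈ Ioo (0 : ℝ) 1, HasDerivAt Z
      (Z s * !![0, 0; g s, 0] + !![1, 0; primitive g s, 1] * !![0, f s; 0, 0]) s)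
    (hZ0 : Z 0 = 0) :
    EqOn Z (fun s => !![-primitive (f * primitive g) s, primitive f s;
      -primitive (f * primitive g ^ 2) s, primitive (f * primitive g) s] *
        !![1, 0; primitive g s, 1]) (Icc 0 1) := by
  have hG := hg.continuousOn_primitive zero_le_one
  have hfG : ContinuousOn (f * primitive g) (Icc 0 1) := hf.mul hG
  have hfG2 : ContinuousOn (f * primitive g ^ 2) (Icc 0 1) := hf.mul (hG.pow 2)
  refine eqOn_of_hasDerivAt_mul_add
    (continuousOn_matrix_fin_two continuousOn_const continuousOn_const hg continuousOn_const) hZ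
    ?_ hZ' (fun s hs => ?_) ?_
  · exact (continuousOn_matrix_fin_two (hfG.continuousOn_primitive zero_le_one).neg
      (hf.continuousOn_primitive zero_le_one) (hfG2.continuousOn_primitive zero_le_one).neg
      (hfG.continuousOn_primitive zero_le_one)).mul
      (continuousOn_matrix_fin_two continuousOn_const continuousOn_const hG continuousOn_const)
  · have hC := hasDerivAt_matrix_fin_two (hfG.hasDerivAt_primitive hs).neg
      (hf.hasDerivAt_primitive hs) (hfG2.hasDerivAt_primitive hs).neg (hfG.hasDerivAt_primitive hs)
    have hP := hasDerivAt_matrix_fin_two (hasDerivAt_const s (1 : ℂ)) (hasDerivAt_const s 0)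
      (hg.hasDerivAt_primitive hs) (hasDerivAt_const s 1)
    refine (hC.matrix_mul hP).congr_deriv ?_
    ext i j; fin_cases i <;> fin_cases j <;> simp <;> ring
  · rw [hZ0]; ext i j; fin_cases i <;> fin_cases j <;> simp

end OffDiagonal

/-- Corollary 2.6: the second `λ`-derivative of the monodromy `M̃(λ) = M(λ⁻¹(λ−1)²)` at
the Sym point `λ = 1` equals `2·[[−I₁, I₀],[I₂, I₁]]`. -/
theorem second_derivative_of_monodromy (f g : ℝ → ℂ)
    (hf : ContinuousOn f (Set.Icc 0 1)) (hg : ContinuousOn g (Set.Icc 0 1))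
    (X : ℝ × ℂ → Matrix (Fin 2) (Fin 2) ℂ)
    (hX : ContDiffOn ℝ 2 X (Set.Icc (0:ℝ) 1 ×ˢ Set.univ))
    (hode : ∀ t : ℂ, ∀ s ∈ Set.Icc (0:ℝ) 1,
      HasDerivWithinAt (fun s' => X (s', t)) (X (s, t) * !![0, t * f s; g s, 0])
        (Set.Icc (0:ℝ) 1) s)
    (hinit : ∀ t : ℂ, X (0, t) = 1)
    (M : ℂ → Matrix (Fin 2) (Fin 2) ℂ) (hM : M = fun t => X (1, t))
    (hgint : (∫ s in (0:ℝ)..1, g s) = 0)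
    (I₀ I₁ I₂ : ℂ)
    (hI₀ : I₀ = ∫ s in (0:ℝ)..1, f s)
    (hI₁ : I₁ = ∫ s in (0:ℝ)..1, f s * ∫ v in (0:ℝ)..s, g v)
    (hI₂ : I₂ = ∫ s in (0:ℝ)..1, g s * ∫ u in (0:ℝ)..s, f u * ∫ v in (0:ℝ)..u, g v) :
    iteratedDeriv 2 (fun l : ℂ => M (l⁻¹ * (l - 1) ^ 2)) 1 =
      (2 : ℂ) • !![-I₁, I₀; I₂, I₁] := by
  subst hM
  have hode' : ∀ t : ℂ, ∀ s ∈ Ioo (0 : ℝ) 1, HasDerivAt (fun s' => X (s', t))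
      (X (s, t) * (!![0, 0; g s, 0] + t • !![0, f s; 0, 0])) s := fun t s hs => by
    rw [← potential_eq_add_smul]
    exact (hode t s (Ioo_subset_Icc_self hs)).hasDerivAt (Icc_mem_nhds hs.1 hs.2)
  have hmonodromy := hasDerivAt_of_linear_potential
    (continuousOn_matrix_fin_two continuousOn_const continuousOn_const hg continuousOn_const)
    (continuousOn_matrix_fin_two continuousOn_const hf continuousOn_const continuousOn_const)
    hX hode' hinit (right_mem_Icc.2 zero_le_one)
  rw [iteratedDeriv_two_comp_inv_mul_sub_one_sq fun t => (hmonodromy t).differentiableAt,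
    (hmonodromy 0).deriv]
  have hslice : ContinuousOn (fun s => X (s, 0)) (Icc 0 1) :=
    hX.continuousOn.comp (by fun_prop) fun s hs => ⟨hs, trivial⟩
  have hX0 := eqOn_unipotent hg hslice (fun s hs => by simpa using hode' 0 s hs) (hinit 0)
  have hZ := eqOn_first_variation hf hg (continuousOn_partialT_apply (hX.of_le one_le_two) 0 1)
    (fun s hs => by
      simpa [hX0 (Ioo_subset_Icc_self hs)] using hasDerivAt_partialT_apply hX hode' 0 1 hs)
    (by simp [partialT_zero_eq_zero (hX.differentiableOn two_ne_zero) hinit])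
  have hG1 : primitive g 1 = 0 := hgint
  rw [show partialT X 1 0 1 = _ from hZ (right_mem_Icc.2 zero_le_one)]
  dsimp only
  rw [hG1, ← Matrix.one_fin_two, mul_one,
    hI₂.trans (primitive_mul_primitive_eq_neg hf hg hG1), hI₀, hI₁]
  rfl
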